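/- arXiv:2001.03869 — 2 statements merged into one kernel-verified Lean document; each statement's English description precedes it below -/
import Mathlib

section
/- Let π be a derangement of {1,…,n} (a permutation with no fixed points). Then the functional graph on vertex set {1,…,n} with edge set {{i, π(i)} : i ∈ [n]} is properly 3-colorable; moreover there exists a partition [n] = V_1 ∪ V_2 ∪ V_3 into three color classes such that |V_j| ≥ ⌊n/3⌋ for each j and for every j and every i ∈ V_j, π(i) ∉ V_j. -/
namespace DTC

/-- Color value at position `k` of the pattern `(01)^p (21)^r (02)^q [1]`. -/
def fval (p r q k : ℕ) : ℕ :=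
  if k < 2*p then (if k % 2 = 0 then 0 else 1)
  else if k < 2*p+2*r then (if k % 2 = 0 then 2 else 1)
  else if k < 2*p+2*r+2*q then (if k % 2 = 0 then 0 else 2)
  else 1

lemma fval_lt (p r q k : ℕ) : fval p r q k < 3 := by
  unfold fval; split_ifs <;> omega

lemma fval_step (p r q t k : ℕ) (ht : t ≤ 1) (hp : t = 0 → 1 ≤ p) (hq : t = 1 → 1 ≤ q)
    (hk : k + 1 < 2*(p+r+q)+t) : fval p r q (k+1) ≠ fval p r q k := by
  unfold fval; split_ifs <;> omega

lemma fval_wrap (p r q t : ℕ) (ht : t ≤ 1) (hp : t = 0 → 1 ≤ p) (hq : t = 1 → 1 ≤ q)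
    (hL : 2 ≤ 2*(p+r+q)+t) : fval p r q 0 ≠ fval p r q (2*(p+r+q)+t-1) := by
  unfold fval; split_ifs <;> omega

end DTC

namespace DTC
open Finset

lemma count0 (p r q t : ℕ) :
    ((range (2*(p+r+q)+t)).filter fun k => fval p r q k = 0).card = p + q := by
  have hset : ((range (2*(p+r+q)+t)).filter fun k => fval p r q k = 0) =
      (range p).image (fun j => 2*j) ∪ (range q).image (fun j => 2*(p+r+j)) := by
    ext k
    simp only [mem_filter, mem_range, mem_union, mem_image]
    constructor
    · rintro ⟨hk, hf⟩
      unfold fval at hf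
      split_ifs at hf <;>
        first
          | omega
          | exact Or.inl ⟨k/2, by omega, by omega⟩
          | exact Or.inr ⟨(k-(2*p+2*r))/2, by omega, by omega⟩
    · rintro (⟨j, hj, rfl⟩ | ⟨j, hj, rfl⟩) <;>
        · refine ⟨by omega, ?_⟩
          unfold fval; split_ifs <;> omega
  rw [hset, card_union_of_disjoint, card_image_of_injective _ (fun a b h => by omega),
    card_image_of_injective _ (fun a b h => by omega), card_range, card_range]
  · rw [disjoint_left]
    intro x hx hy
    simp only [mem_image, mem_range] at hx hy
    obtain ⟨j, hj, rfl⟩ := hx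
    obtain ⟨j', hj', h⟩ := hy
    omega

end DTC

namespace DTC
open Finset

lemma count1 (p r q t : ℕ) :
    ((range (2*(p+r+q)+t)).filter fun k => fval p r q k = 1).card = p + r + t := by
  have hset : ((range (2*(p+r+q)+t)).filter fun k => fval p r q k = 1) =
      ((range p).image (fun j => 2*j+1) ∪ (range r).image (fun j => 2*(p+j)+1)) ∪
        (range t).image (fun j => 2*(p+r+q)+j) := by
    ext k
    simp only [mem_filter, mem_range, mem_union, mem_image]
    constructor
    · rintro ⟨hk, hf⟩
      unfold fval at hf
      split_ifs at hf <;>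
        first
          | omega
          | exact Or.inl (Or.inl ⟨k/2, by omega, by omega⟩)
          | exact Or.inl (Or.inr ⟨(k-2*p)/2, by omega, by omega⟩)
          | exact Or.inr ⟨k-2*(p+r+q), by omega, by omega⟩
    · rintro ((⟨j, hj, rfl⟩ | ⟨j, hj, rfl⟩) | ⟨j, hj, rfl⟩) <;>
        · refine ⟨by omega, ?_⟩
          unfold fval; split_ifs <;> omega
  rw [hset, card_union_of_disjoint, card_union_of_disjoint,
    card_image_of_injective _ (fun a b h => by omega),
    card_image_of_injective _ (fun a b h => by omega),
    card_image_of_injective _ (fun a b h => by omega), card_range, card_range, card_range]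
  · rw [disjoint_left]
    intro x hx hy
    simp only [mem_image, mem_range] at hx hy
    obtain ⟨j, hj, rfl⟩ := hx
    obtain ⟨j', hj', h⟩ := hy
    omega
  · rw [disjoint_left]
    intro x hx hy
    simp only [mem_image, mem_range, mem_union] at hx hy
    obtain (⟨j, hj, rfl⟩ | ⟨j, hj, rfl⟩) := hx <;>
      · obtain ⟨j', hj', h⟩ := hy
        omega

lemma count2 (p r q t : ℕ) :
    ((range (2*(p+r+q)+t)).filter fun k => fval p r q k = 2).card = r + q := by
  have hset : ((range (2*(p+r+q)+t)).filter fun k => fval p r q k = 2) =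
      (range r).image (fun j => 2*(p+j)) ∪ (range q).image (fun j => 2*(p+r+j)+1) := by
    ext k
    simp only [mem_filter, mem_range, mem_union, mem_image]
    constructor
    · rintro ⟨hk, hf⟩
      unfold fval at hf
      split_ifs at hf <;>
        first
          | omega
          | exact Or.inl ⟨(k-2*p)/2, by omega, by omega⟩
          | exact Or.inr ⟨(k-(2*p+2*r))/2, by omega, by omega⟩
    · rintro (⟨j, hj, rfl⟩ | ⟨j, hj, rfl⟩) <;>
        · refine ⟨by omega, ?_⟩
          unfold fval; split_ifs <;> omega
  rw [hset, card_union_of_disjoint, card_image_of_injective _ (fun a b h => by omega),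
    card_image_of_injective _ (fun a b h => by omega), card_range, card_range]
  · rw [disjoint_left]
    intro x hx hy
    simp only [mem_image, mem_range] at hx hy
    obtain ⟨j, hj, rfl⟩ := hx
    obtain ⟨j', hj', h⟩ := hy
    omega

end DTC

namespace DTC
open Finset

lemma pattern_core (p r q t : ℕ) (ht : t ≤ 1) (hp : t = 0 → 1 ≤ p) (hq : t = 1 → 1 ≤ q)
    (hL : 2 ≤ 2*(p+r+q)+t) :
    ∃ f : ℕ → Fin 3,
      (∀ k, k+1 < 2*(p+r+q)+t → f (k+1) ≠ f k) ∧
      f 0 ≠ f (2*(p+r+q)+t-1) ∧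
      ((range (2*(p+r+q)+t)).filter fun k => f k = 0).card = p+q ∧
      ((range (2*(p+r+q)+t)).filter fun k => f k = 1).card = p+r+t ∧
      ((range (2*(p+r+q)+t)).filter fun k => f k = 2).card = r+q := by
  refine ⟨fun k => ⟨fval p r q k, fval_lt p r q k⟩, ?_, ?_, ?_, ?_, ?_⟩
  · intro k hk
    simp only [ne_eq, Fin.mk.injEq]
    exact fval_step p r q t k ht hp hq hk
  · simp only [ne_eq, Fin.mk.injEq]
    exact fval_wrap p r q t ht hp hq hL
  · rw [← count0 p r q t]
    congr 1
    apply filter_congr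
    intro k _
    simp [Fin.ext_iff]
  · rw [← count1 p r q t]
    congr 1
    apply filter_congr
    intro k _
    simp [Fin.ext_iff]
  · rw [← count2 p r q t]
    congr 1
    apply filter_congr
    intro k _
    simp [Fin.ext_iff]

lemma pattern_ordered (L x0 x1 x2 : ℕ) (hL : 2 ≤ L) (hsum : x0 + x1 + x2 = L)
    (h0 : x0 ≤ L/2) (h1 : x1 ≤ L/2) (h2 : x2 ≤ L/2) (hm0 : x2 ≤ x0) (hm1 : x2 ≤ x1) :
    ∃ f : ℕ → Fin 3,
      (∀ k, k+1 < L → f (k+1) ≠ f k) ∧ f 0 ≠ f (L-1) ∧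
      ((range L).filter fun k => f k = 0).card = x0 ∧
      ((range L).filter fun k => f k = 1).card = x1 ∧
      ((range L).filter fun k => f k = 2).card = x2 := by
  set t := L % 2 with htdef
  set p := L/2 - x2 with hpdef
  set r := L/2 - x0 with hrdef
  set q := L/2 + t - x1 with hqdef
  have hLeq : 2*(p+r+q)+t = L := by omega
  have ht : t ≤ 1 := by omega
  have hp : t = 0 → 1 ≤ p := by omega
  have hq : t = 1 → 1 ≤ q := by omega
  obtain ⟨f, hstep, hwrap, c0, c1, c2⟩ := pattern_core p r q t ht hp hq (by omega)
  rw [hLeq] at hstep hwrap c0 c1 c2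
  exact ⟨f, hstep, hwrap, by omega, by omega, by omega⟩

lemma recolor (L : ℕ) (c : Fin 3 → Fin 3) (hcinj : Function.Injective c)
    (f : ℕ → Fin 3)
    (hstep : ∀ k, k + 1 < L → f (k+1) ≠ f k) (hwrap : f 0 ≠ f (L-1)) :
    (∀ k, k + 1 < L → (c ∘ f) (k+1) ≠ (c ∘ f) k) ∧ (c ∘ f) 0 ≠ (c ∘ f) (L-1) :=
  ⟨fun k hk h => hstep k hk (hcinj h), fun h => hwrap (hcinj h)⟩

lemma count_recolor (L : ℕ) (c : Fin 3 → Fin 3) (f : ℕ → Fin 3) (j w : Fin 3)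
    (hw : ∀ v : Fin 3, c v = j ↔ v = w) :
    ((range L).filter fun k => (c ∘ f) k = j).card = ((range L).filter fun k => f k = w).card := by
  congr 1
  apply filter_congr
  intro k _
  simpa using hw (f k)

lemma pattern (L : ℕ) (hL : 2 ≤ L) (x : Fin 3 → ℕ) (hsum : x 0 + x 1 + x 2 = L)
    (hmax : ∀ j, x j ≤ L / 2) :
    ∃ f : ℕ → Fin 3, (∀ k, k + 1 < L → f (k+1) ≠ f k) ∧ f 0 ≠ f (L-1) ∧
      ∀ j, ((range L).filter fun k => f k = j).card = x j := by
  by_cases h2 : x 2 ≤ x 0 ∧ x 2 ≤ x 1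
  · obtain ⟨f, hstep, hwrap, c0, c1, c2⟩ :=
      pattern_ordered L (x 0) (x 1) (x 2) hL hsum (hmax 0) (hmax 1) (hmax 2) h2.1 h2.2
    refine ⟨f, hstep, hwrap, ?_⟩
    intro j
    fin_cases j <;> assumption
  · by_cases h1 : x 1 ≤ x 0 ∧ x 1 ≤ x 2
    · -- x 1 is min: color pattern with (x0, x2, x1) then swap colors 1 and 2
      obtain ⟨f, hstep, hwrap, c0, c1, c2⟩ :=
        pattern_ordered L (x 0) (x 2) (x 1) hL (by omega) (hmax 0) (hmax 2) (hmax 1) h1.1 h1.2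
      set c : Fin 3 → Fin 3 := ![0, 2, 1] with hc
      have hcinj : Function.Injective c := by decide
      obtain ⟨hstep', hwrap'⟩ := recolor L c hcinj f hstep hwrap
      refine ⟨c ∘ f, hstep', hwrap', ?_⟩
      intro j
      fin_cases j
      · exact (count_recolor L c f 0 0 (by decide)).trans c0
      · exact (count_recolor L c f 1 2 (by decide)).trans c2
      · exact (count_recolor L c f 2 1 (by decide)).trans c1
    · -- x 0 is min: pattern with (x1, x2, x0); recolor 0↦1, 1↦2, 2↦0
      obtain ⟨f, hstep, hwrap, c0, c1, c2⟩ :=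
        pattern_ordered L (x 1) (x 2) (x 0) hL (by omega) (hmax 1) (hmax 2) (hmax 0)
          (by omega) (by omega)
      set c : Fin 3 → Fin 3 := ![1, 2, 0] with hc
      have hcinj : Function.Injective c := by decide
      obtain ⟨hstep', hwrap'⟩ := recolor L c hcinj f hstep hwrap
      refine ⟨c ∘ f, hstep', hwrap', ?_⟩
      intro j
      fin_cases j
      · exact (count_recolor L c f 0 2 (by decide)).trans c2
      · exact (count_recolor L c f 1 0 (by decide)).trans c0
      · exact (count_recolor L c f 2 1 (by decide)).trans c1

end DTC

namespace DTC

lemma balance (s : Fin 3 → ℕ) (L : ℕ) (hL : 2 ≤ L)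
    (hs : ∀ j, (s 0 + s 1 + s 2) / 3 ≤ s j) :
    ∃ x : Fin 3 → ℕ, x 0 + x 1 + x 2 = L ∧ (∀ j, x j ≤ L / 2) ∧
      ∀ j, (s 0 + s 1 + s 2 + L) / 3 ≤ s j + x j := by
  have hs0 := hs 0; have hs1 := hs 1; have hs2 := hs 2
  set m' := (s 0 + s 1 + s 2 + L) / 3 with hm'
  set h := L / 2 with hh
  set d0 := m' - s 0 with hd0
  set d1 := m' - s 1 with hd1
  set d2 := m' - s 2 with hd2
  set e0 := min (h - d0) (L - (d0 + d1 + d2)) with he0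
  set e1 := min (h - d1) (L - (d0 + d1 + d2) - e0) with he1
  set e2 := L - (d0 + d1 + d2) - e0 - e1 with he2
  refine ⟨![d0 + e0, d1 + e1, d2 + e2], ?_, ?_, ?_⟩
  · show d0 + e0 + (d1 + e1) + (d2 + e2) = L
    omega
  · intro j
    fin_cases j
    · show d0 + e0 ≤ h; omega
    · show d1 + e1 ≤ h; omega
    · show d2 + e2 ≤ h; omega
  · intro j
    fin_cases j
    · show m' ≤ s 0 + (d0 + e0); omega
    · show m' ≤ s 1 + (d1 + e1); omega
    · show m' ≤ s 2 + (d2 + e2); omega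

end DTC

namespace DTC
open Finset Equiv Equiv.Perm

lemma aux_empty (α : Type) [DecidableEq α] [Fintype α] (h : Fintype.card α = 0)
    (π : Equiv.Perm α) :
    ∃ c : α → Fin 3, (∀ i, c (π i) ≠ c i) ∧
      ∀ j : Fin 3, Fintype.card α / 3 ≤ (Finset.univ.filter fun i => c i = j).card := by
  have hE : IsEmpty α := Fintype.card_eq_zero_iff.mp h
  exact ⟨fun a => hE.elim a, fun i => hE.elim i, fun j => by simp [h]⟩

theorem aux (N : ℕ) : ∀ (α : Type) [DecidableEq α] [Fintype α], Fintype.card α ≤ N →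
    ∀ π : Equiv.Perm α, (∀ i, π i ≠ i) →
    ∃ c : α → Fin 3, (∀ i, c (π i) ≠ c i) ∧
      ∀ j : Fin 3, Fintype.card α / 3 ≤ (Finset.univ.filter fun i => c i = j).card := by
  induction N with
  | zero =>
    intro α _ _ hcard π hπ
    exact aux_empty α (Nat.le_zero.mp hcard) π
  | succ N ih =>
    intro α _ _ hcard π hπ
    by_cases hα : Fintype.card α = 0
    · exact aux_empty α hα π
    obtain ⟨a⟩ : Nonempty α := Fintype.card_pos_iff.mp (Nat.pos_of_ne_zero hα)
    classical
    set C : Finset α := (π.cycleOf a).support with hC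
    set L := C.card with hLdef
    have hL2 : 2 ≤ L := two_le_card_support_cycleOf_iff.mpr (hπ a)
    have haC : a ∈ C := by
      rw [hC, mem_support_cycleOf_iff]
      exact ⟨Equiv.Perm.SameCycle.refl _ _, mem_support.mpr (hπ a)⟩
    have hCinv : ∀ y, y ∈ C ↔ π y ∈ C := by
      intro y
      rw [hC, mem_support_cycleOf_iff, mem_support_cycleOf_iff, sameCycle_apply_right]
    have hLle : L ≤ Fintype.card α := Finset.card_le_univ C
    -- the permutation restricted to the complement of the cycle of `a`
    have hinv' : ∀ y, y ∉ C ↔ π y ∉ C := fun y => not_iff_not.mpr (hCinv y)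
    set π' : Equiv.Perm {y // y ∉ C} := π.subtypePerm (fun y => (hinv' y).symm) with hπ'def
    have hπ' : ∀ y, π' y ≠ y := fun y hy => hπ y.val (congrArg Subtype.val hy)
    have hcardB : Fintype.card {y // y ∉ C} = Fintype.card α - L := by
      rw [Fintype.card_subtype_compl]
      congr 1
      exact Fintype.card_coe C
    obtain ⟨c', hproper', hcount'⟩ := ih {y // y ∉ C} (by omega) π' hπ'
    set s : Fin 3 → ℕ :=
      fun j => ((univ : Finset {y // y ∉ C}).filter fun y => c' y = j).card with hs
    have hsum' : s 0 + s 1 + s 2 = Fintype.card {y // y ∉ C} := by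
      have h1 : (univ : Finset {y // y ∉ C}).card =
          ∑ j : Fin 3, ((univ : Finset {y // y ∉ C}).filter fun y => c' y = j).card :=
        Finset.card_eq_sum_card_fiberwise (fun y _ => mem_univ (c' y))
      rw [Fintype.card, h1, Fin.sum_univ_three]
    obtain ⟨x, hxsum, hxcap, hxlow⟩ :=
      balance s L hL2 (fun j => by rw [hsum']; exact hcount' j)
    obtain ⟨f, hstep, hwrap, hcnt⟩ := pattern L hL2 x hxsum hxcap
    -- membership of powers
    have hpow_mem : ∀ k : ℕ, (π ^ k) a ∈ C := by
      intro k
      induction k with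
      | zero => simpa using haC
      | succ k ihk =>
          have hps : (π ^ (k+1)) a = π ((π ^ k) a) := by
            rw [pow_succ', Equiv.Perm.mul_apply]
          rw [hps]
          exact (hCinv _).mp ihk
    -- existence of an index below L
    have key1 : ∀ y ∈ C, ∃ k, k < L ∧ (π ^ k) a = y := by
      intro y hy
      have hyc : π.SameCycle a y := (mem_support_cycleOf_iff.mp hy).1
      obtain ⟨i, hi, hieq⟩ := hyc.exists_pow_eq_of_mem_support (mem_support.mpr (hπ a))
      exact ⟨i, hi, hieq⟩
    -- uniqueness of the index
    have key2 : ∀ k1 k2, k1 < L → k2 < L → (π ^ k1) a = (π ^ k2) a → k1 = k2 := by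
      intro k1 k2 h1 h2 heq
      have := ((π.isCycleOn_support_cycleOf a).pow_apply_eq_pow_apply haC).mp heq
      rwa [Nat.ModEq, Nat.mod_eq_of_lt h1, Nat.mod_eq_of_lt h2] at this
    -- the coloring
    set c : α → Fin 3 :=
      fun y => if h : y ∈ C then f (Nat.find (key1 y h)) else c' ⟨y, h⟩ with hcdef
    have hcC : ∀ (y) (h : y ∈ C), c y = f (Nat.find (key1 y h)) := fun y h => dif_pos h
    have hcB : ∀ (y) (h : y ∉ C), c y = c' ⟨y, h⟩ := fun y h => dif_neg h
    have hidx_lt : ∀ (y) (h : y ∈ C),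
        Nat.find (key1 y h) < L ∧ (π ^ Nat.find (key1 y h)) a = y :=
      fun y h => Nat.find_spec (key1 y h)
    have hidx_eq : ∀ (y) (h : y ∈ C) (k), k < L → (π ^ k) a = y → Nat.find (key1 y h) = k := by
      intro y h k hk hke
      exact key2 _ _ (hidx_lt y h).1 hk ((hidx_lt y h).2.trans hke.symm)
    refine ⟨c, ?_, ?_⟩
    · -- properness
      intro i
      by_cases hi : i ∈ C
      · have hpi : π i ∈ C := (hCinv i).mp hi
        obtain ⟨hkL, hka⟩ := hidx_lt i hi
        set k := Nat.find (key1 i hi) with hk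
        have hsucc : (π ^ (k+1)) a = π i := by rw [pow_succ', Equiv.Perm.mul_apply, hka]
        rw [hcC i hi, hcC (π i) hpi, ← hk]
        by_cases hkL1 : k + 1 < L
        · rw [hidx_eq (π i) hpi (k+1) hkL1 hsucc]
          exact hstep k hkL1
        · have hkeq : k + 1 = L := by omega
          have hLa : (π ^ L) a = a :=
            ((π.isCycleOn_support_cycleOf a).pow_apply_eq haC).mpr dvd_rfl
          have hpia : π i = a := by rw [← hsucc, hkeq, hLa]
          have h0 : (π ^ 0) a = π i := by rw [pow_zero, Equiv.Perm.one_apply, hpia]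
          rw [hidx_eq (π i) hpi 0 (by omega) h0, show k = L - 1 by omega]
          exact hwrap
      · have hpi : π i ∉ C := fun h => hi ((hCinv i).mpr h)
        rw [hcB i hi, hcB (π i) hpi]
        have hsp : (⟨π i, hpi⟩ : {y // y ∉ C}) = π' ⟨i, hi⟩ := rfl
        rw [hsp]
        exact hproper' ⟨i, hi⟩
    · -- counting
      intro j
      have hpart1 : (C.filter fun i => c i = j).card = x j := by
        rw [← hcnt j]
        symm
        apply Finset.card_bij (fun k _ => (π ^ k) a)
        · intro k hk
          obtain ⟨hkr, hfk⟩ := mem_filter.mp hk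
          rw [mem_range] at hkr
          refine mem_filter.mpr ⟨hpow_mem k, ?_⟩
          rw [hcC _ (hpow_mem k), hidx_eq _ (hpow_mem k) k hkr rfl]
          exact hfk
        · intro k1 hk1 k2 hk2 heq
          rw [mem_filter, mem_range] at hk1 hk2
          exact key2 k1 k2 hk1.1 hk2.1 heq
        · intro y hy
          obtain ⟨hyC, hyc⟩ := mem_filter.mp hy
          refine ⟨Nat.find (key1 y hyC), ?_, (hidx_lt y hyC).2⟩
          rw [mem_filter, mem_range]
          refine ⟨(hidx_lt y hyC).1, ?_⟩
          rw [← hcC y hyC]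
          exact hyc
      have hpart2 : ((Cᶜ : Finset α).filter fun i => c i = j).card = s j := by
        symm
        apply Finset.card_bij (fun (y : {y // y ∉ C}) _ => y.val)
        · intro y hy
          refine mem_filter.mpr ⟨Finset.mem_compl.mpr y.2, ?_⟩
          rw [hcB y.val y.2]
          have : (⟨y.val, y.2⟩ : {y // y ∉ C}) = y := rfl
          rw [this]
          exact (mem_filter.mp hy).2
        · intro y1 _ y2 _ heq
          exact Subtype.ext heq
        · intro y hy
          obtain ⟨hyc, hycj⟩ := mem_filter.mp hy
          have hyn : y ∉ C := Finset.mem_compl.mp hyc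
          refine ⟨⟨y, hyn⟩, ?_, rfl⟩
          rw [mem_filter]
          refine ⟨mem_univ _, ?_⟩
          rw [← hcB y hyn]
          exact hycj
      have hsplitset : (univ.filter fun i => c i = j) =
          (C.filter fun i => c i = j) ∪ ((Cᶜ : Finset α).filter fun i => c i = j) := by
        rw [← filter_union, union_compl]
      rw [hsplitset,
        card_union_of_disjoint (disjoint_filter_filter disjoint_compl_right),
        hpart1, hpart2]
      have hfinal := hxlow j
      rw [hsum', hcardB] at hfinal
      omega

end DTC

/-- The functional graph of a derangement is properly 3-colorable with balanced
color classes: there is a coloring `c : [n] → {0,1,2}` with `c(π(i)) ≠ c(i)` for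
all `i`, and every color class has size at least `⌊n/3⌋`. -/
theorem derangement_three_coloring
    (n : ℕ) (π : Equiv.Perm (Fin n)) (hπ : ∀ i, π i ≠ i) :
    ∃ c : Fin n → Fin 3,
      (∀ i, c (π i) ≠ c i) ∧
      ∀ j : Fin 3, n / 3 ≤ (Finset.univ.filter fun i => c i = j).card := by
  obtain ⟨c, h1, h2⟩ := DTC.aux n (Fin n) (by simp) π hπ
  refine ⟨c, h1, fun j => ?_⟩
  have := h2 j
  rwa [Fintype.card_fin] at this
end

section
/- Suppose two decoders have error probabilities satisfying −(1/n)log₂ P_e(MMI) ≥ E* − ε_n and −(1/n)log₂ P_e(ML) ≤ E* + ε'_n with ε_n = (κ/n)r²(r+1)log₂(1+n/κ) + r³ log₂(1+n)/n + (κ/n)log₂ r + (1/n)log₂ κ and ε'_n = (κ/n)r² log₂(1+n/κ) − (κ/n)log₂ r. Then 0 ≤ (1/n)[log₂ P_e(MMI) − log₂ P_e(ML)] ≤ (κ/n)·r²(r+2)·log₂(1+n/κ) + r³·log₂(1+n)/n + (1/n)log₂ κ, and in particular if κ = o(n/log n) then (1/n)[log₂ P_e(MMI) − log₂ P_e(ML)]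 → 0 as n → ∞. -/
open Filter

/-- Suboptimality of MMI versus ML: under the exponent bounds for the two
decoders, the gap of their normalized log error probabilities is between `0`
and `(κ/n)r²(r+2)log₂(1+n/κ) + r³ log₂(1+n)/n + (1/n)log₂ κ`; if
`κ log n / n → 0` the gap vanishes. -/
theorem mmi_vs_ml_gap
    (r : ℕ) (hr : 1 ≤ r) (E : ℝ)
    (PeMMI PeML : ℕ → ℝ)
    (hposMMI : ∀ n, 0 < PeMMI n) (hposML : ∀ n, 0 < PeML n)
    (κ : ℕ → ℕ) (hκpos : ∀ n, 1 ≤ κ n)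
    (hBayes : ∀ n, PeML n ≤ PeMMI n)
    (hMMI : ∀ n : ℕ, 1 ≤ n →
      E - ((κ n : ℝ) / (n : ℝ) * ((r : ℝ) ^ 2 * (r + 1)) * Real.logb 2 (1 + (n : ℝ) / (κ n : ℝ))
            + (r : ℝ) ^ 3 * Real.logb 2 (1 + (n : ℝ)) / (n : ℝ)
            + (κ n : ℝ) / (n : ℝ) * Real.logb 2 (r : ℝ)
            + (1 / (n : ℝ)) * Real.logb 2 (κ n : ℝ))
        ≤ -(1 / (n : ℝ)) * Real.logb 2 (PeMMI n))
    (hML : ∀ n : ℕ, 1 ≤ n →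
      -(1 / (n : ℝ)) * Real.logb 2 (PeML n)
        ≤ E + ((κ n : ℝ) / (n : ℝ) * (r : ℝ) ^ 2 * Real.logb 2 (1 + (n : ℝ) / (κ n : ℝ))
            - (κ n : ℝ) / (n : ℝ) * Real.logb 2 (r : ℝ))) :
    (∀ n : ℕ, 1 ≤ n →
      0 ≤ (1 / (n : ℝ)) * (Real.logb 2 (PeMMI n) - Real.logb 2 (PeML n)) ∧
      (1 / (n : ℝ)) * (Real.logb 2 (PeMMI n) - Real.logb 2 (PeML n))
        ≤ (κ n : ℝ) / (n : ℝ) * ((r : ℝ) ^ 2 * (r + 2)) * Real.logb 2 (1 + (n : ℝ) / (κ n : ℝ))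
          + (r : ℝ) ^ 3 * Real.logb 2 (1 + (n : ℝ)) / (n : ℝ)
          + (1 / (n : ℝ)) * Real.logb 2 (κ n : ℝ)) ∧
    (Tendsto (fun n : ℕ => (κ n : ℝ) * Real.log n / n) atTop (nhds 0) →
      Tendsto (fun n : ℕ => (1 / (n : ℝ)) * (Real.logb 2 (PeMMI n) - Real.logb 2 (PeML n)))
        atTop (nhds 0)) := by
  have hlog2 : (0:ℝ) < Real.log 2 := Real.log_pos (by norm_num)
  have main : ∀ n : ℕ, 1 ≤ n →
      0 ≤ (1 / (n : ℝ)) * (Real.logb 2 (PeMMI n) - Real.logb 2 (PeML n)) ∧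
      (1 / (n : ℝ)) * (Real.logb 2 (PeMMI n) - Real.logb 2 (PeML n))
        ≤ (κ n : ℝ) / (n : ℝ) * ((r : ℝ) ^ 2 * (r + 2)) * Real.logb 2 (1 + (n : ℝ) / (κ n : ℝ))
          + (r : ℝ) ^ 3 * Real.logb 2 (1 + (n : ℝ)) / (n : ℝ)
          + (1 / (n : ℝ)) * Real.logb 2 (κ n : ℝ) := by
    intro n hn
    have hn0 : (0:ℝ) < n := by exact_mod_cast hn
    constructor
    · have hlb : Real.logb 2 (PeML n) ≤ Real.logb 2 (PeMMI n) :=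
        Real.logb_le_logb_of_le (by norm_num) (hposML n) (hBayes n)
      exact mul_nonneg (by positivity) (by linarith)
    · have h1 := hMMI n hn
      have h2 := hML n hn
      have hkey : (1 / (n : ℝ)) * (Real.logb 2 (PeMMI n) - Real.logb 2 (PeML n))
          = (-(1 / (n : ℝ)) * Real.logb 2 (PeML n))
            - (-(1 / (n : ℝ)) * Real.logb 2 (PeMMI n)) := by ring
      have hid : (κ n : ℝ) / (n : ℝ) * ((r : ℝ) ^ 2 * (r + 2))
            * Real.logb 2 (1 + (n : ℝ) / (κ n : ℝ))
          = (κ n : ℝ) / (n : ℝ) * ((r : ℝ) ^ 2 * (r + 1))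
              * Real.logb 2 (1 + (n : ℝ) / (κ n : ℝ))
            + (κ n : ℝ) / (n : ℝ) * (r : ℝ) ^ 2
              * Real.logb 2 (1 + (n : ℝ) / (κ n : ℝ)) := by ring
      rw [hkey]
      linarith
  refine ⟨main, ?_⟩
  intro h
  set C : ℝ := (2*(r:ℝ)^2*((r:ℝ)+2) + 2*(r:ℝ)^3 + 1) / Real.log 2 with hC
  have hg : Tendsto (fun n : ℕ => C * ((κ n : ℝ) * Real.log n / n)) atTop (nhds 0) := by
    simpa using h.const_mul C
  apply squeeze_zero' ?_ ?_ hg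
  · filter_upwards [eventually_ge_atTop 1] with n hn
    exact (main n hn).1
  · have hev := h.eventually (eventually_lt_nhds one_pos)
    filter_upwards [hev, eventually_ge_atTop 3] with n hlt hn3
    have hn1 : 1 ≤ n := by omega
    have hn0 : (0:ℝ) < n := by exact_mod_cast hn1
    have hn3' : (3:ℝ) ≤ n := by exact_mod_cast hn3
    have hκ1 : (1:ℝ) ≤ κ n := by exact_mod_cast hκpos n
    have hκ0 : (0:ℝ) < κ n := by linarith
    have hlogn1 : (1:ℝ) ≤ Real.log n := by
      have he : Real.exp 1 ≤ (n:ℝ) := by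
        have := Real.exp_one_lt_d9
        linarith
      calc (1:ℝ) = Real.log (Real.exp 1) := (Real.log_exp 1).symm
        _ ≤ Real.log n := Real.log_le_log (Real.exp_pos 1) he
    have hlogn0 : (0:ℝ) ≤ Real.log n := by linarith
    have hκn : (κ n : ℝ) ≤ n := by
      have h' : (κ n : ℝ) * Real.log n < n := by
        have := (div_lt_one hn0).mp hlt
        linarith
      nlinarith
    -- log bounds
    have hsq : (1:ℝ) + (n:ℝ) ≤ (n:ℝ)^2 := by nlinarith
    have hL : Real.logb 2 (1 + (n:ℝ) / (κ n : ℝ)) ≤ 2 * Real.log n / Real.log 2 := by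
      rw [Real.logb]
      gcongr
      have h1 : (n:ℝ) / (κ n : ℝ) ≤ n := div_le_self (le_of_lt hn0) hκ1
      have h2 : Real.log (1 + (n:ℝ) / (κ n : ℝ)) ≤ Real.log ((n:ℝ)^2) := by
        apply Real.log_le_log (by positivity)
        linarith
      rw [Real.log_pow] at h2
      push_cast at h2
      linarith
    have hL2 : Real.logb 2 (1 + (n:ℝ)) ≤ 2 * Real.log n / Real.log 2 := by
      rw [Real.logb]
      gcongr
      have h2 : Real.log (1 + (n:ℝ)) ≤ Real.log ((n:ℝ)^2) := by
        apply Real.log_le_log (by positivity)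
        linarith
      rw [Real.log_pow] at h2
      push_cast at h2
      linarith
    have hLκ : Real.logb 2 (κ n : ℝ) ≤ Real.log n / Real.log 2 := by
      rw [Real.logb]
      gcongr
    have hfU := (main n hn1).2
    refine le_trans hfU ?_
    have hV : (κ n : ℝ) / (n : ℝ) * ((r : ℝ) ^ 2 * (r + 2)) * Real.logb 2 (1 + (n : ℝ) / (κ n : ℝ))
          + (r : ℝ) ^ 3 * Real.logb 2 (1 + (n : ℝ)) / (n : ℝ)
          + (1 / (n : ℝ)) * Real.logb 2 (κ n : ℝ)
        ≤ (κ n : ℝ) / (n : ℝ) * ((r : ℝ) ^ 2 * (r + 2)) * (2 * Real.log n / Real.log 2)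
          + (r : ℝ) ^ 3 * (2 * Real.log n / Real.log 2) / (n : ℝ)
          + (1 / (n : ℝ)) * (Real.log n / Real.log 2) := by
      gcongr <;> positivity
    refine le_trans hV ?_
    have hkey : C * ((κ n : ℝ) * Real.log n / n)
        - ((κ n : ℝ) / (n : ℝ) * ((r : ℝ) ^ 2 * (r + 2)) * (2 * Real.log n / Real.log 2)
          + (r : ℝ) ^ 3 * (2 * Real.log n / Real.log 2) / (n : ℝ)
          + (1 / (n : ℝ)) * (Real.log n / Real.log 2))
        = ((2*(r:ℝ)^3 + 1) * ((κ n : ℝ) - 1) * Real.log n) / ((n:ℝ) * Real.log 2) := by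
      rw [hC]
      field_simp
      ring
    have hpos : 0 ≤ ((2*(r:ℝ)^3 + 1) * ((κ n : ℝ) - 1) * Real.log n) / ((n:ℝ) * Real.log 2) := by
      apply div_nonneg _ (by positivity)
      have : (0:ℝ) ≤ (κ n : ℝ) - 1 := by linarith
      positivity
    linarith
end
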